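/- Let H be any subgroup of SL_n(ℤ). The bottom row map induces a bijection between the set of double cosets Γ₀(N)\SL_n(ℤ)/H and the set of orbits of the right action of H on ℙ^{n-1}(ℤ/Nℤ), sending the double coset Γ₀(N)γH to the H-orbit of 𝔟(γ). -/

import Mathlib

open Matrix

/-- `SL_n(ℤ)`, the special linear group of `n × n` integer matrices of determinant 1. -/
abbrev SL (n : ℕ) := Matrix.SpecialLinearGroup (Fin n) ℤ

/-- `Γ₀(N)`: the matrices in `SL_{n+1}(ℤ)` whose bottom row is congruent to
`(0, …, 0, *)` mod `N`, i.e. all bottom-row entries except the last are divisible by `N`. -/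
def Gamma0 (N : ℕ) {n : ℕ} (γ : SL (n + 1)) : Prop :=
  ∀ j : Fin (n + 1), j ≠ Fin.last n → (N : ℤ) ∣ γ.1 (Fin.last n) j

/-- A row vector over `ℤ/Nℤ` is primitive if its coordinates generate the unit ideal. -/
def IsPrimitive {m N : ℕ} (v : Fin m → ZMod N) : Prop :=
  Ideal.span (Set.range v) = ⊤

/-- Primitive row vectors over `ℤ/Nℤ`. -/
def PrimVec (m N : ℕ) := {v : Fin m → ZMod N // IsPrimitive v}

/-- Projective equivalence: two primitive vectors are equivalent iff they differ by
multiplication by a unit of `ℤ/Nℤ`. -/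
instance projSetoid (m N : ℕ) : Setoid (PrimVec m N) where
  r v w := ∃ u : (ZMod N)ˣ, w.1 = fun i => (u : ZMod N) * v.1 i
  iseqv := by
    refine ⟨fun v => ⟨1, by funext i; simp⟩, ?_, ?_⟩
    · rintro ⟨v, hv⟩ ⟨w, hw⟩ ⟨u, h⟩
      replace h : w = fun i => (u : ZMod N) * v i := h
      refine ⟨u⁻¹, ?_⟩
      funext i
      simp [h]
    · rintro ⟨v, hv⟩ ⟨w, hw⟩ ⟨x, hx⟩ ⟨u, h⟩ ⟨u', h'⟩
      replace h : w = fun i => (u : ZMod N) * v i := h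
      replace h' : x = fun i => (u' : ZMod N) * w i := h'
      refine ⟨u' * u, ?_⟩
      funext i
      simp [h', h, mul_assoc]

/-- `ℙ^{m-1}(ℤ/Nℤ)`: primitive row vectors modulo multiplication by units of `ℤ/Nℤ`. -/
def Proj (m N : ℕ) := Quotient (projSetoid m N)

/-- Reduction of an integral matrix mod `N`. -/
def modN {n N : ℕ} (γ : SL n) : Matrix (Fin n) (Fin n) (ZMod N) :=
  γ.1.map (Int.cast : ℤ → ZMod N)

lemma modN_det {n N : ℕ} (γ : SL n) : (modN (N := N) γ).det = 1 := by
  have := (Int.castRingHom (ZMod N)).map_det γ.1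
  simpa [modN, γ.2] using this.symm

lemma primitive_vecMul {m N : ℕ} (v : Fin m → ZMod N) (hv : IsPrimitive v) (γ : SL m) :
    IsPrimitive (Matrix.vecMul v (modN γ)) := by
  set A := modN (N := N) γ with hAdef
  have : Invertible A := Matrix.invertibleOfIsUnitDet A (by rw [modN_det]; exact isUnit_one)
  have hvw : v = Matrix.vecMul (Matrix.vecMul v A) (⅟A) := by
    rw [Matrix.vecMul_vecMul, mul_invOf_self, Matrix.vecMul_one]
  refine eq_top_iff.mpr ?_
  rw [_root_.IsPrimitive] at hv
  rw [← hv]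
  refine Ideal.span_le.mpr ?_
  rintro x ⟨j, rfl⟩
  have hj : v j = ∑ i, Matrix.vecMul v A i * (⅟A) i j := congrFun hvw j
  rw [hj]
  exact Ideal.sum_mem _ fun i _ =>
    Ideal.mul_mem_right _ _ (Ideal.subset_span ⟨i, rfl⟩)

lemma vecMul_const_mul {m : ℕ} {R : Type*} [CommRing R] (c : R) (v : Fin m → R)
    (A : Matrix (Fin m) (Fin m) R) :
    Matrix.vecMul (fun i => c * v i) A = fun j => c * Matrix.vecMul v A j := by
  funext j
  simp [Matrix.vecMul, dotProduct, Finset.mul_sum, mul_assoc]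

/-- The map on primitive vectors underlying the right action of `SL_m(ℤ)`. -/
def ractFun {m N : ℕ} (γ : SL m) (v : PrimVec m N) : PrimVec m N :=
  ⟨Matrix.vecMul v.1 (modN γ), primitive_vecMul v.1 v.2 γ⟩

lemma ractFun_compat {m N : ℕ} (γ : SL m) :
    ∀ v w : PrimVec m N, v ≈ w → ractFun γ v ≈ ractFun γ w := by
  rintro ⟨v, hv⟩ ⟨w, hw⟩ ⟨u, h⟩
  replace h : w = fun i => (u : ZMod N) * v i := h
  refine ⟨u, ?_⟩
  show Matrix.vecMul w (modN γ) = _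
  rw [h, vecMul_const_mul]
  rfl

/-- The right action of `SL_m(ℤ)` on `ℙ^{m-1}(ℤ/Nℤ)`: reduce the matrix mod `N` and
multiply the row vector on the right. -/
def ract {m N : ℕ} (x : Proj m N) (γ : SL m) : Proj m N :=
  Quotient.map (ractFun γ) (ractFun_compat γ) x

lemma brow_primitive {n N : ℕ} (γ : SL (n + 1)) :
    IsPrimitive (fun j => ((γ.1 (Fin.last n) j : ℤ) : ZMod N)) := by
  rw [_root_.IsPrimitive, Ideal.eq_top_iff_one]
  have hdet : γ.1.det = 1 := γ.2
  have hexp := Matrix.det_succ_row γ.1 (Fin.last n)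
  have key : ((γ.1.det : ℤ) : ZMod N) ∈
      Ideal.span (Set.range fun j => ((γ.1 (Fin.last n) j : ℤ) : ZMod N)) := by
    rw [hexp]
    push_cast
    refine Ideal.sum_mem _ fun j _ => ?_
    exact Ideal.mul_mem_right _ _ (Ideal.mul_mem_left _ _ (Ideal.subset_span ⟨j, rfl⟩))
  rw [hdet] at key
  simpa using key

/-- The bottom row map `𝔟 : SL_{n+1}(ℤ) → ℙ^n(ℤ/Nℤ)`: the class of the bottom row
of the matrix, reduced mod `N`. -/
def brow {n : ℕ} (N : ℕ) (γ : SL (n + 1)) : Proj (n + 1) N :=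
  ⟦⟨fun j => ((γ.1 (Fin.last n) j : ℤ) : ZMod N), brow_primitive γ⟩⟧

/-!
A matrix `g` lies in `Γ₀(N)` exactly when its bottom row is `(0, …, 0, u)` mod `N`, and then `u`
is a unit; since the bottom row of `g * γ` is that row times `γ` mod `N`, this says
`𝔟(g γ) = 𝔟(γ)` iff `g ∈ Γ₀(N)`. Together with `𝔟(γ h) = 𝔟(γ) · h` this identifies the double
cosets with the orbits on the image of `𝔟`, and `𝔟` is onto: a primitive vector mod `N` lifts to
`d` times a primitive integral vector, `d` being a unit mod `N`, and over a principal ideal domain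
a primitive vector is, up to a unit, the bottom row of a matrix of determinant `1`.
-/

theorem Ideal.span_range_eq_top_of_gcd_eq_one {R : Type*} [CommRing R] [IsPrincipalIdealRing R]
    [NormalizedGCDMonoid R] {ι : Type*} [Fintype ι] {b : ι → R}
    (hb : Finset.univ.gcd b = 1) : Ideal.span (Set.range b) = ⊤ := by
  obtain ⟨e, he⟩ := (Ideal.span (Set.range b)).isPrincipal_iff.mp inferInstance
  have he_dvd : ∀ j, e ∣ b j := fun j => by
    rw [← Ideal.mem_span_singleton, ← Ideal.submodule_span_eq, ← he]
    exact Ideal.subset_span ⟨j, rfl⟩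
  rw [he, Ideal.submodule_span_eq, Ideal.span_singleton_eq_top]
  exact isUnit_of_dvd_one (hb ▸ Finset.dvd_gcd fun j _ => he_dvd j)

section Unimodular

variable {R : Type*} [CommRing R] [IsDomain R] [IsPrincipalIdealRing R]
  {ι : Type*} [Fintype ι] [DecidableEq ι]

/-- The rows are `b` and a basis of the kernel of a functional taking `b` to `1`. -/
theorem Matrix.exists_isUnit_det_row_eq {b : ι → R} (hb : Ideal.span (Set.range b) = ⊤)
    (i : ι) : ∃ M : Matrix ι ι R, IsUnit M.det ∧ M i = b := by
  obtain ⟨c, hc⟩ := (Submodule.mem_span_range_iff_exists_fun R).mp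
    (hb ▸ Submodule.mem_top : (1 : R) ∈ Ideal.span (Set.range b))
  let φ : (ι → R) →ₗ[R] R := Fintype.linearCombination R c
  have hφ : φ b = 1 := by
    rw [← hc]
    simp [φ, Fintype.linearCombination_apply, mul_comm]
  obtain ⟨k, bK⟩ := Submodule.basisOfPid (Pi.basisFun R ι) (LinearMap.ker φ)
  let B := Module.Basis.mkFinCons b bK
    (fun t x hx h => by simpa [hφ, LinearMap.mem_ker.mp hx] using congrArg φ h)
    (fun z => ⟨-φ z, by simp [hφ]⟩)
  let e := B.indexEquiv (Pi.basisFun R ι)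
  let B' := B.reindex (e.trans (Equiv.swap (e 0) i))
  refine ⟨Matrix.of B', ?_, ?_⟩
  · rw [← Pi.basisFun_det_apply]
    exact (Pi.basisFun R ι).isUnit_det B'
  · show B' i = b
    simp [B', B]

theorem Matrix.SpecialLinearGroup.exists_row_eq_smul {b : ι → R}
    (hb : Ideal.span (Set.range b) = ⊤) (i : ι) :
    ∃ (γ : SpecialLinearGroup ι R) (u : Rˣ), b = (u : R) • (γ : Matrix ι ι R) i := by
  obtain ⟨M, ⟨u, hu⟩, hM⟩ := exists_isUnit_det_row_eq hb i
  refine ⟨⟨M.updateRow i ((↑u⁻¹ : R) • b), ?_⟩, u, ?_⟩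
  · rw [det_updateRow_smul, ← hM, updateRow_eq_self, ← hu, Units.inv_mul]
  · change b = (u : R) • M.updateRow i ((↑u⁻¹ : R) • b) i
    rw [updateRow_self, smul_smul, Units.mul_inv, one_smul]

end Unimodular

theorem IsPrimitive.isUnit_of_forall_dvd {m N : ℕ} {v : Fin m → ZMod N} (hv : IsPrimitive v)
    {c : ZMod N} (hc : ∀ j, c ∣ v j) : IsUnit c := by
  rw [← Ideal.span_singleton_eq_top, eq_top_iff, ← hv]
  exact Ideal.span_le.mpr (Set.range_subset_iff.mpr fun j => Ideal.mem_span_singleton.mpr (hc j))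

section BottomRow

variable {n N : ℕ}

theorem modN_mul (γ δ : SL n) : modN (N := N) (γ * δ) = modN γ * modN δ :=
  Matrix.map_mul (f := Int.castRingHom (ZMod N))

theorem isUnit_modN (γ : SL n) : IsUnit (modN (N := N) γ) := by
  rw [Matrix.isUnit_iff_isUnit_det, modN_det]
  exact isUnit_one

theorem brow_mul (γ h : SL (n + 1)) : brow N (γ * h) = ract (brow N γ) h := by
  change Quotient.mk _ _ = Quotient.mk _ _
  congr 1
  apply Subtype.ext
  change modN (γ * h) (Fin.last n) = modN γ (Fin.last n) ᵥ* modN h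
  rw [modN_mul, mul_apply_eq_vecMul]

theorem brow_eq_brow_iff (γ δ : SL (n + 1)) :
    brow N γ = brow N δ ↔
      ∃ u : (ZMod N)ˣ, modN (N := N) δ (Fin.last n) = (u : ZMod N) • modN γ (Fin.last n) :=
  Quotient.eq

theorem gamma0_iff_modN_row_eq_single (g : SL (n + 1)) :
    Gamma0 N g ↔ ∃ u : (ZMod N)ˣ, modN g (Fin.last n) = Pi.single (Fin.last n) (u : ZMod N) := by
  have hzero : Gamma0 N g ↔ ∀ j ≠ Fin.last n, modN (N := N) g (Fin.last n) j = 0 :=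
    forall₂_congr fun j _ => (ZMod.intCast_zmod_eq_zero_iff_dvd _ _).symm
  rw [hzero]
  constructor
  · intro h
    set c := modN (N := N) g (Fin.last n) (Fin.last n)
    have hrow : modN g (Fin.last n) = Pi.single (Fin.last n) c := by
      ext j
      by_cases hj : j = Fin.last n
      · subst hj; simp [c]
      · rw [h j hj, Pi.single_eq_of_ne hj]
    obtain ⟨u, hu⟩ := (brow_primitive (N := N) g).isUnit_of_forall_dvd (c := c) fun j => by
      change c ∣ modN g (Fin.last n) j
      rw [hrow, Pi.single_apply]
      split_ifs <;> simp
    exact ⟨u, hu ▸ hrow⟩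
  · rintro ⟨u, hu⟩ j hj
    rw [hu, Pi.single_eq_of_ne hj]

theorem brow_mul_eq_brow_iff (g γ : SL (n + 1)) : brow N (g * γ) = brow N γ ↔ Gamma0 N g := by
  rw [eq_comm, brow_eq_brow_iff, gamma0_iff_modN_row_eq_single]
  refine exists_congr fun u => ?_
  rw [modN_mul, mul_apply_eq_vecMul]
  exact (vecMul_injective_of_isUnit (isUnit_modN γ)).eq_iff' (single_vecMul _ _ _)

theorem brow_surjective : Function.Surjective (brow (n := n) N) := by
  rintro ⟨v, hv⟩
  let a : Fin (n + 1) → ℤ := fun j => (v j).cast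
  obtain ⟨b, hab, hb⟩ := Finset.extract_gcd a Finset.univ_nonempty
  obtain ⟨γ, ε, hγ⟩ := Matrix.SpecialLinearGroup.exists_row_eq_smul
    (Ideal.span_range_eq_top_of_gcd_eq_one hb) (Fin.last n)
  set c : ZMod N := ((Finset.univ.gcd a * ε : ℤ) : ZMod N)
  have hv_eq : ∀ j, v j = c * modN γ (Fin.last n) j := fun j => by
    rw [← ZMod.intCast_zmod_cast (v j)]
    change ((a j : ℤ) : ZMod N) = _
    rw [hab j (Finset.mem_univ j), congrFun hγ j]
    simp [c, modN, mul_assoc]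
  obtain ⟨u, hu⟩ := hv.isUnit_of_forall_dvd fun j => hv_eq j ▸ dvd_mul_right c _
  exact ⟨γ, Quotient.sound ⟨u, funext fun j => hu ▸ hv_eq j⟩⟩

end BottomRow

theorem double_cosets_biject_with_orbits_general (n N : ℕ)
    (H : Subgroup (SL (n + 1))) :
    (∀ γ γ' : SL (n + 1),
      (∃ g h : SL (n + 1), Gamma0 N g ∧ h ∈ H ∧ γ' = g * γ * h) ↔
        ∃ h ∈ H, ract (brow N γ) h = brow N γ') ∧
    (∀ x : Proj (n + 1) N, ∃ γ : SL (n + 1), ∃ h ∈ H, ract (brow N γ) h = x) := by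
  refine ⟨fun γ γ' => ⟨?_, ?_⟩, fun x => ?_⟩
  · rintro ⟨g, h, hg, hh, rfl⟩
    exact ⟨h, hh, by rw [brow_mul, (brow_mul_eq_brow_iff g γ).mpr hg]⟩
  · rintro ⟨h, hh, hγ'⟩
    refine ⟨γ' * (γ * h)⁻¹, h, ?_, hh, by group⟩
    rw [← brow_mul_eq_brow_iff, inv_mul_cancel_right, brow_mul, hγ']
  · obtain ⟨γ, rfl⟩ := brow_surjective x
    exact ⟨γ, 1, H.one_mem, by rw [← brow_mul, mul_one]⟩

/-- For any subgroup `H ≤ SL_{n+1}(ℤ)`, the bottom row map induces a bijection between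
the double cosets `Γ₀(N)\SL_{n+1}(ℤ)/H` and the orbits of the right `H`-action on
`ℙ^n(ℤ/Nℤ)`, sending `Γ₀(N)γH` to the `H`-orbit of `𝔟(γ)`:  two elements lie in the
same double coset iff their bottom rows lie in the same `H`-orbit, and every point of
`ℙ^n(ℤ/Nℤ)` lies in the `H`-orbit of some `𝔟(γ)`. -/
theorem double_cosets_biject_with_orbits (n N : ℕ) (hn : 1 ≤ n) (hN : 1 ≤ N)
    (H : Subgroup (SL (n + 1))) :
    (∀ γ γ' : SL (n + 1),
      (∃ g h : SL (n + 1), Gamma0 N g ∧ h ∈ H ∧ γ' = g * γ * h) ↔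
        ∃ h ∈ H, ract (brow N γ) h = brow N γ') ∧
    (∀ x : Proj (n + 1) N, ∃ γ : SL (n + 1), ∃ h ∈ H, ract (brow N γ) h = x) :=
  double_cosets_biject_with_orbits_general n N H
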